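/- Theorem (zeros are eigenvalues of A_η): with the zero-subspace transformation and (A,B,C) of relative degree ρ, for every s ∈ 𝕜 one has C * adjugate(s·I_n − A) * B = 0 if and only if det(s·I_{l_z} − A_η) = 0. In other words, the zeros of the system (A,B,C), i.e., the roots of s ↦ C·adjugate(sI−A)·B, are exactly the eigenvalues of A_η. -/

import Mathlib

/-!
Conjugating by `T` puts the system in a normal form. Since the last `ρ` rows of `T` are
`C, CA, …, CA^(ρ-1)`, the row `C T⁻¹` is the unit vector at index `n - ρ`; since moreover
`B_z B = 0` and `C A^i B = 0` for `i < ρ - 1`, the column `T B` is `b` times the last unit vector,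
with `b = C A^(ρ-1) B ≠ 0`; and the rows `n - ρ, …, n - 2` of `T A T⁻¹` are the next unit
vectors. Hence `C adj(sI - A) B = b · adj(sI - T A T⁻¹)_(n-ρ, n-1)`. By Cramer's rule this entry
is the determinant of `sI - T A T⁻¹` with its last row replaced by the unit vector at `n - ρ`,
which is block upper triangular with diagonal blocks `sI - A_η` and a `ρ × ρ` block of
determinant `1`.
-/

open Matrix

namespace Matrix

variable {R : Type*} [CommRing R]

theorem det_eq_one_of_rows_sub_single {r : ℕ} (s : R) (D : Matrix (Fin (r + 1)) (Fin (r + 1)) R)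
    (hD : ∀ k : Fin r, D k.castSucc = s • Pi.single k.castSucc 1 - Pi.single k.succ 1)
    (hlast : D (Fin.last r) = Pi.single 0 1) : D.det = 1 := by
  have hminor : (D.submatrix Fin.castSucc Fin.succ).det = (-1) ^ r := by
    rw [det_of_isLowerTriangular _ fun a b (hab : a < b) => ?_]
    · simp [hD, Fin.castSucc_lt_succ.ne']
    · have : b.succ ≠ a.castSucc := (Fin.castSucc_lt_succ.trans (Fin.succ_lt_succ_iff.2 hab)).ne'
      simp [hD, this, hab.ne]
  rw [det_succ_row D (Fin.last r), Fin.sum_univ_succ, hlast]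
  simp [hminor, ← pow_add, ← two_mul, pow_mul]

theorem adjugate_smul_one_sub_apply_of_rows_single {η : Type*} [Fintype η] [DecidableEq η]
    {r : ℕ} (s : R) (X : Matrix (η ⊕ Fin (r + 1)) (η ⊕ Fin (r + 1)) R)
    (hX : ∀ k : Fin r, X (.inr k.castSucc) = Pi.single (.inr k.succ) 1) :
    (s • 1 - X).adjugate (.inr 0) (.inr (Fin.last r)) = (s • 1 - X.toBlocks₁₁).det := by
  set N := (s • 1 - X).updateRow (.inr (Fin.last r)) (Pi.single (.inr 0) 1)
  have h11 : N.toBlocks₁₁ = s • 1 - X.toBlocks₁₁ := by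
    ext i j
    simp [N, toBlocks₁₁, one_apply]
  have h21 : N.toBlocks₂₁ = 0 := by
    ext k j
    rcases Fin.eq_castSucc_or_eq_last k with ⟨k, rfl⟩ | rfl
    · simp [N, toBlocks₂₁, hX]
    · simp [N, toBlocks₂₁]
  have h22 : N.toBlocks₂₂.det = 1 := by
    refine det_eq_one_of_rows_sub_single s _ (fun k => ?_) ?_
    · ext m
      simp [N, toBlocks₂₂, hX, one_apply, Pi.single_apply, eq_comm]
    · ext m
      simp [N, toBlocks₂₂, Pi.single_apply]
  rw [adjugate_apply]
  change N.det = _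
  rw [← fromBlocks_toBlocks N, h21, det_fromBlocks_zero₂₁, h11, h22, mul_one]

variable {ι : Type*} [Fintype ι] [DecidableEq ι]

theorem adjugate_mul_mul_nonsing_inv (T M : Matrix ι ι R) (hT : IsUnit T.det) :
    (T * M * T⁻¹).adjugate = T * M.adjugate * T⁻¹ := by
  have hadj : ∀ U : Matrix ι ι R, IsUnit U.det → U.adjugate = U.det • U⁻¹ := fun U hU => by
    rw [inv_def, smul_smul, Ring.mul_inverse_cancel _ hU, one_smul]
  rw [adjugate_mul_distrib, adjugate_mul_distrib, hadj T hT,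
    hadj T⁻¹ (isUnit_nonsing_inv_det T hT), nonsing_inv_nonsing_inv T hT, det_nonsing_inv]
  simp [smul_smul, Ring.mul_inverse_cancel _ hT, Matrix.mul_assoc]

theorem vecMul_adjugate_dotProduct_conj (T M : Matrix ι ι R) (hT : IsUnit T.det)
    (c β : ι → R) :
    c ᵥ* M.adjugate ⬝ᵥ β = c ᵥ* T⁻¹ ᵥ* (T * M * T⁻¹).adjugate ⬝ᵥ (T *ᵥ β) := by
  have hcancel : T⁻¹ * (T * M.adjugate * T⁻¹ * T) = M.adjugate := by
    rw [Matrix.mul_assoc, nonsing_inv_mul T hT, Matrix.mul_one, ← Matrix.mul_assoc,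
      nonsing_inv_mul T hT, Matrix.one_mul]
  rw [adjugate_mul_mul_nonsing_inv T M hT, dotProduct_mulVec, vecMul_vecMul, vecMul_vecMul,
    hcancel]

theorem row_vecMul_nonsing_inv (T : Matrix ι ι R) (hT : IsUnit T.det) (i : ι) :
    T i ᵥ* T⁻¹ = Pi.single i 1 := by
  ext j
  rw [← mul_apply_eq_vecMul, mul_nonsing_inv T hT, one_eq_pi_single]

variable {η : Type*} {r : ℕ}

theorem submatrix_conj_inr_castSucc [DecidableEq η] (e : η ⊕ Fin (r + 1) ≃ ι) (T A : Matrix ι ι R)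
    (hT : IsUnit T.det) (c : ι → R) (hTc : ∀ k : Fin (r + 1), T (e (.inr k)) = c ᵥ* A ^ (k : ℕ))
    (k : Fin r) : (T * A * T⁻¹).submatrix e e (.inr k.castSucc) = Pi.single (.inr k.succ) 1 := by
  have hshift : T (e (.inr k.castSucc)) ᵥ* A = T (e (.inr k.succ)) := by
    rw [hTc, hTc, vecMul_vecMul, ← pow_succ, Fin.val_castSucc, Fin.val_succ]
  ext y
  change (T (e _) ᵥ* A ᵥ* T⁻¹) (e y) = _
  rw [hshift, row_vecMul_nonsing_inv T hT]
  simp [Pi.single_apply]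

theorem mulVec_eq_single_last (e : η ⊕ Fin (r + 1) ≃ ι) (T A : Matrix ι ι R) (c β : ι → R)
    (hTc : ∀ k : Fin (r + 1), T (e (.inr k)) = c ᵥ* A ^ (k : ℕ))
    (hβ : ∀ i, T (e (.inl i)) ⬝ᵥ β = 0) (hcβ : ∀ k < r, c ᵥ* A ^ k ⬝ᵥ β = 0) :
    T *ᵥ β = Pi.single (e (.inr (Fin.last r))) (c ᵥ* A ^ r ⬝ᵥ β) := by
  ext j
  obtain ⟨i | k, rfl⟩ := e.surjective j
  · rw [Pi.single_eq_of_ne (e.injective.ne Sum.inl_ne_inr)]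
    exact hβ i
  · change T (e (.inr k)) ⬝ᵥ β = _
    rw [hTc]
    rcases Fin.eq_castSucc_or_eq_last k with ⟨k, rfl⟩ | rfl
    · rw [Pi.single_eq_of_ne (by simp [Fin.castSucc_ne_last]), Fin.val_castSucc]
      exact hcβ k k.isLt
    · simp

theorem vecMul_adjugate_smul_one_sub_dotProduct_eq_mul_det [Fintype η] [DecidableEq η]
    (e : η ⊕ Fin (r + 1) ≃ ι) (T A : Matrix ι ι R)
    (hT : IsUnit T.det) (c β : ι → R)
    (hTc : ∀ k : Fin (r + 1), T (e (.inr k)) = c ᵥ* A ^ (k : ℕ))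
    (hβ : ∀ i, T (e (.inl i)) ⬝ᵥ β = 0) (hcβ : ∀ k < r, c ᵥ* A ^ k ⬝ᵥ β = 0) (s : R) :
    c ᵥ* (s • 1 - A).adjugate ⬝ᵥ β =
      (c ᵥ* A ^ r ⬝ᵥ β) * (s • 1 - ((T * A * T⁻¹).submatrix e e).toBlocks₁₁).det := by
  have hc : c ᵥ* T⁻¹ = Pi.single (e (.inr 0)) 1 := by
    simpa [hTc] using row_vecMul_nonsing_inv T hT (e (.inr 0))
  have hconj : T * (s • 1 - A) * T⁻¹ = s • 1 - T * A * T⁻¹ := by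
    rw [Matrix.mul_sub, Matrix.sub_mul, Matrix.mul_smul, Matrix.mul_one, Matrix.smul_mul,
      mul_nonsing_inv T hT]
  have hsub : (s • 1 - T * A * T⁻¹).submatrix e e = s • 1 - (T * A * T⁻¹).submatrix e e := by
    ext x y
    simp [one_apply]
  rw [vecMul_adjugate_dotProduct_conj T _ hT, mulVec_eq_single_last e T A c β hTc hβ hcβ,
    hc, hconj, ← adjugate_smul_one_sub_apply_of_rows_single s _
      (submatrix_conj_inr_castSucc e T A hT c hTc), ← hsub, adjugate_submatrix_equiv_self]
  simp [mul_comm]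

end Matrix

/-- **zeros are the eigenvalues of `A_η`.** For every `s`,
`C * adj(s I - A) * B = 0` iff `det(s I - A_η) = 0`: the zeros of the system `(A, B, C)`
are exactly the eigenvalues of `A_η`. -/
theorem stmt10 {𝕜 : Type*} [Field 𝕜] {n ρ : ℕ} (hρ : 1 ≤ ρ) (hρn : ρ ≤ n)
    (A : Matrix (Fin n) (Fin n) 𝕜) (B : Matrix (Fin n) (Fin 1) 𝕜)
    (C : Matrix (Fin 1) (Fin n) 𝕜)
    (hrd : ∀ i : ℕ, i + 2 ≤ ρ → C * A ^ i * B = 0)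
    (hrd' : C * A ^ (ρ - 1) * B ≠ 0)
    (Cbar : Matrix (Fin ρ) (Fin n) 𝕜)
    (hCbar : ∀ (i : Fin ρ) (j : Fin n), Cbar i j = (C * A ^ (i : ℕ)) 0 j)
    (Bz : Matrix (Fin (n - ρ)) (Fin n) 𝕜) (hBz : Bz * B = 0)
    (T : Matrix (Fin n) (Fin n) 𝕜)
    (hT : ∀ (i : Fin n) (j : Fin n),
      T i j = if h : (i : ℕ) < n - ρ then Bz ⟨i, h⟩ j
              else Cbar ⟨(i : ℕ) - (n - ρ), by omega⟩ j)
    (hTinv : IsUnit T.det)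
    (Seta : Matrix (Fin n) (Fin (n - ρ)) 𝕜)
    (hSeta : ∀ (i : Fin n) (k : Fin (n - ρ)), Seta i k = T⁻¹ i ⟨(k : ℕ), by omega⟩)
    (Aeta : Matrix (Fin (n - ρ)) (Fin (n - ρ)) 𝕜)
    (hAeta : Aeta = Bz * A * Seta)
    :
    ∀ s : 𝕜,
      (C * (s • (1 : Matrix (Fin n) (Fin n) 𝕜) - A).adjugate * B) 0 0 = 0 ↔
      (s • (1 : Matrix (Fin (n - ρ)) (Fin (n - ρ)) 𝕜) - Aeta).det = 0 := by
  intro s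
  obtain ⟨r, rfl⟩ : ∃ r, ρ = r + 1 := ⟨ρ - 1, by omega⟩
  let e : Fin (n - (r + 1)) ⊕ Fin (r + 1) ≃ Fin n := finSumFinEquiv.trans (finCongr (by omega))
  have hTinl (i : Fin (n - (r + 1))) : T (e (.inl i)) = Bz i := by
    ext j
    simp [e, hT]
  have hTinr (k : Fin (r + 1)) : T (e (.inr k)) = C.row 0 ᵥ* A ^ (k : ℕ) := by
    ext j
    rw [hT, dif_neg (by simp [e]), hCbar]
    simp [e, mul_apply_eq_vecMul, row]
  have hAeta' : ((T * A * T⁻¹).submatrix e e).toBlocks₁₁ = Aeta := by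
    ext i j
    change (T (e (.inl i)) ᵥ* A ᵥ* T⁻¹) (e (.inl j)) = _
    rw [hTinl, hAeta, show Seta = T⁻¹.submatrix id (e ∘ .inl) by ext p k; rw [hSeta]; rfl]
    rfl
  have hb : C.row 0 ᵥ* A ^ r ⬝ᵥ B.col 0 ≠ 0 := fun h =>
    hrd' (by ext i j; fin_cases i; fin_cases j; exact h)
  have key := vecMul_adjugate_smul_one_sub_dotProduct_eq_mul_det e T A hTinv (C.row 0) (B.col 0)
    hTinr (fun i => by rw [hTinl]; exact congrFun (congrFun hBz i) 0)
    (fun k hk => congrFun (congrFun (hrd k (by omega)) 0) 0) s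
  rw [show (C * (s • 1 - A).adjugate * B) 0 0 = C.row 0 ᵥ* (s • 1 - A).adjugate ⬝ᵥ B.col 0
    from rfl, key, hAeta', mul_eq_zero]
  exact or_iff_right hb
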